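/- arXiv:1308.6477 — 3 statements merged into one kernel-verified Lean document; each statement's English description precedes it below -/
import Mathlib

section
/- For every μ > 0 and every real z, φ(μ+1, z) = μ·∫₀¹ (1−t)^{μ−1}·cos(zt) dt. -/
open Real

/-- `phi a z = Σ_{n≥0} (−1)^n z^(2n)/(a)_{2n}` where `(a)_m` is the Pochhammer symbol. -/
noncomputable def phi (a z : ℝ) : ℝ :=
  ∑' n : ℕ, (-1 : ℝ) ^ n * z ^ (2 * n) / (ascPochhammer ℝ (2 * n)).eval a

/-!
Expand `cos (z t)` in its Taylor series and integrate term by term against the weight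
`(1 - t)^(μ - 1)`; the series is dominated by `|(1 - t)^(μ - 1)| cosh (z t)`, which is integrable.
The `2n`-th moment of the weight is the beta integral `B(2n + 1, μ) = (2n)! / (μ)_{2n+1}`,
and `(μ)_{2n+1} = μ (μ + 1)_{2n}` turns `μ` times the resulting series into `phi (μ + 1) z`.
-/

open MeasureTheory Nat

lemma ascPochhammer_eval_eq_prod_range {R : Type*} [CommSemiring R] (n : ℕ) (r : R) :
    (ascPochhammer R n).eval r = ∏ j ∈ Finset.range n, (r + j) := by
  induction n with
  | zero => simp
  | succ n ih => simp [ascPochhammer_succ_right, ih, Finset.prod_range_succ]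

theorem intervalIntegral.hasSum_integral_mul_cos {w : ℝ → ℝ} {a b : ℝ}
    (hw : IntervalIntegrable w volume a b) (z : ℝ) :
    HasSum (fun n : ℕ => (-1) ^ n * z ^ (2 * n) / (2 * n)! * ∫ t in a..b, w t * t ^ (2 * n))
      (∫ t in a..b, w t * cos (z * t)) := by
  have hmeas : AEStronglyMeasurable w (volume.restrict (Set.uIoc a b)) :=
    hw.def'.aestronglyMeasurable
  have hsum := hasSum_integral_of_dominated_convergence
    (F := fun (n : ℕ) t => w t * ((-1) ^ n * (z * t) ^ (2 * n) / (2 * n)!))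
    (fun n t => ‖w t‖ * ((z * t) ^ (2 * n) / (2 * n)!))
    (fun n => hmeas.mul (by fun_prop))
    (fun n => .of_forall fun t _ => by
      simp [← abs_mul, (even_two_mul n).pow_abs])
    (.of_forall fun t _ => ((hasSum_cosh (z * t)).mul_left _).summable)
    (by
      simp_rw [((hasSum_cosh (z * _)).mul_left _).tsum_eq]
      exact hw.norm.mul_continuousOn (by fun_prop))
    (.of_forall fun t _ => (hasSum_cos (z * t)).mul_left _)
  have hterm (n : ℕ) : ∫ t in a..b, w t * ((-1) ^ n * (z * t) ^ (2 * n) / (2 * n)!) =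
      (-1) ^ n * z ^ (2 * n) / (2 * n)! * ∫ t in a..b, w t * t ^ (2 * n) := by
    rw [← intervalIntegral.integral_const_mul]
    congr 1 with t
    ring
  simpa only [hterm] using hsum

lemma intervalIntegrable_one_sub_rpow {r : ℝ} (hr : -1 < r) :
    IntervalIntegrable (fun t : ℝ => (1 - t) ^ r) volume 0 1 := by
  simpa using
    ((intervalIntegral.intervalIntegrable_rpow' (a := 0) (b := 1) hr).comp_sub_left 1).symm

lemma integral_one_sub_rpow_mul_pow {μ : ℝ} (hμ : 0 < μ) (k : ℕ) :
    ∫ t in (0:ℝ)..1, (1 - t) ^ (μ - 1) * t ^ k =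
      k ! / (ascPochhammer ℝ (k + 1)).eval μ := by
  have hcast :
      Complex.betaIntegral (k + 1) μ = ↑(∫ t in (0:ℝ)..1, (1 - t) ^ (μ - 1) * t ^ k) := by
    rw [Complex.betaIntegral, ← intervalIntegral.integral_ofReal]
    refine intervalIntegral.integral_congr fun t ht => ?_
    rw [Set.uIcc_of_le zero_le_one] at ht
    push_cast [Complex.ofReal_cpow (sub_nonneg.2 ht.2)]
    rw [add_sub_cancel_right, Complex.cpow_natCast, mul_comm]
  apply Complex.ofReal_injective
  rw [← hcast, Complex.betaIntegral_symm, Complex.betaIntegral_eval_nat_add_one_right (by simpa),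
    ascPochhammer_eval_eq_prod_range]
  push_cast
  rfl

theorem phi_cos_integral (μ : ℝ) (hμ : 0 < μ) (z : ℝ) :
    phi (μ + 1) z = μ * ∫ t in (0:ℝ)..1, (1 - t) ^ (μ - 1) * Real.cos (z * t) := by
  have hw : IntervalIntegrable (fun t : ℝ => (1 - t) ^ (μ - 1)) volume 0 1 :=
    intervalIntegrable_one_sub_rpow (by linarith)
  rw [← (intervalIntegral.hasSum_integral_mul_cos hw z).tsum_eq, ← tsum_mul_left, phi]
  refine tsum_congr fun n => ?_
  rw [integral_one_sub_rpow_mul_pow hμ, ascPochhammer_succ_left, Polynomial.eval_mul,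
    Polynomial.eval_comp]
  simp only [Polynomial.eval_X, Polynomial.eval_add, Polynomial.eval_one]
  have : (ascPochhammer ℝ (2 * n)).eval (μ + 1) ≠ 0 :=
    (ascPochhammer_pos _ _ (by linarith)).ne'
  field_simp
end

section
/- Let μ ∈ (0,1). Then for every z > 0, (μ−2)·s_{μ−5/2, 1/2}(z)·s_{μ−1/2, 1/2}(z) − (μ−1)·[s_{μ−3/2, 1/2}(z)]² > 0. -/
open Real

/-- Lommel function of the first kind `s_{ν,1/2}(z)`. -/
noncomputable def lommel (ν z : ℝ) : ℝ :=
  z ^ (ν + 1) / ((ν + 1 / 2) * (ν + 3 / 2)) * phi (ν + 5 / 2) z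

/-!
Put `G t = t ^ (μ + 1) * phi (μ + 2) t` (`rpowPhi (μ + 1)`). Up to the common factor `t ^ (-1/2)`
and constants, the Lommel functions `s_{μ-1/2}`, `s_{μ-3/2}`, `s_{μ-5/2}` are `G`, `G'`, `G''`,
and `G'' + G = r` with `r t = μ (μ + 1) t ^ (μ - 1)`, so the claim is `G * G'' < G' ^ 2`.
In the phase plane, `(G, G')` turns around the moving centre `(r, 0)`; its squared distance
`E = (G - r) ^ 2 + G' ^ 2` to the centre satisfies `E' = -2 r' (G - r)`, so `√E` changes no
faster than `r`. Since `r` decreases, `√E - r` is nondecreasing, and it is positive near `0`.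
Hence `r ^ 2 < E` everywhere, which gives `G * (r - G) < G' ^ 2`.
-/

open Set Filter Topology

section Pochhammer

variable {S : Type*} [CommSemiring S]

theorem ascPochhammer_eval_add (a : S) (n m : ℕ) :
    (ascPochhammer S (n + m)).eval a =
      (ascPochhammer S n).eval a * (ascPochhammer S m).eval (a + n) := by
  rw [← ascPochhammer_mul, Polynomial.eval_mul, Polynomial.eval_comp, Polynomial.eval_add,
    Polynomial.eval_X, Polynomial.eval_natCast]

theorem mul_ascPochhammer_eval_add_one (a : S) (m : ℕ) :
    a * (ascPochhammer S m).eval (a + 1) = (a + m) * (ascPochhammer S m).eval a := by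
  have h := ascPochhammer_eval_add a 1 m
  rw [add_comm 1 m, ascPochhammer_succ_eval] at h
  simpa [mul_comm] using h.symm

theorem ascPochhammer_eval_two_add (a : S) (m : ℕ) :
    (ascPochhammer S (2 + m)).eval a = a * (a + 1) * (ascPochhammer S m).eval (a + 2) := by
  rw [ascPochhammer_eval_add]
  norm_num [ascPochhammer_succ_eval, mul_comm]

end Pochhammer

section Phi

variable {a R y : ℝ}

noncomputable def phiDeriv (a z : ℝ) : ℝ :=
  ∑' n : ℕ, (-1 : ℝ) ^ n * ((2 * n : ℕ) * z ^ (2 * n - 1)) / (ascPochhammer ℝ (2 * n)).eval a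

theorem summable_phi_majorant (ha : 0 < a) {S : ℝ} (hS : 0 ≤ S) :
    Summable fun n : ℕ => (2 * n + 1) * S ^ n / (ascPochhammer ℝ (2 * n)).eval a := by
  refine summable_of_ratio_norm_eventually_le (r := 1 / 2) (by norm_num) ?_
  filter_upwards [eventually_ge_atTop ⌈3 * S⌉₊] with n hn
  have hnS : 3 * S ≤ n := Nat.ceil_le.1 hn
  have hterm : ∀ k : ℕ, 0 ≤ (2 * k + 1) * S ^ k / (ascPochhammer ℝ (2 * k)).eval a :=
    fun k => div_nonneg (mul_nonneg (by positivity) (pow_nonneg hS k))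
      (ascPochhammer_pos _ a ha).le
  have hstep : (ascPochhammer ℝ (2 * (n + 1))).eval a =
      (ascPochhammer ℝ (2 * n)).eval a * ((a + 2 * n) * (a + 2 * n + 1)) := by
    rw [show 2 * (n + 1) = 2 * n + 1 + 1 by ring, ascPochhammer_succ_eval, ascPochhammer_succ_eval]
    push_cast
    ring
  have hratio : (2 * n + 3) * S / ((2 * n + 1) * ((a + 2 * n) * (a + 2 * n + 1))) ≤ 1 / 2 := by
    have h1 : (2 * n + 3) * S * 2 ≤ (2 * n + 1) * (2 * n) := by nlinarith
    have h2 : (2 * n : ℝ) ≤ (a + 2 * n) * (a + 2 * n + 1) := by nlinarith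
    rw [div_le_iff₀ (by positivity)]
    nlinarith [mul_le_mul_of_nonneg_left h2 (by positivity : (0 : ℝ) ≤ 2 * n + 1)]
  rw [Real.norm_of_nonneg (by exact_mod_cast hterm (n + 1)), Real.norm_of_nonneg (hterm n), hstep]
  calc _ = (2 * n + 3) * S / ((2 * n + 1) * ((a + 2 * n) * (a + 2 * n + 1))) *
        ((2 * n + 1) * S ^ n / (ascPochhammer ℝ (2 * n)).eval a) := by
          push_cast
          field_simp
          ring
    _ ≤ _ := mul_le_mul_of_nonneg_right hratio (hterm n)

theorem norm_phi_term_le (ha : 0 < a) (hR : 1 ≤ R) (hy : |y| ≤ R) (n : ℕ) :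
    ‖(-1 : ℝ) ^ n * y ^ (2 * n) / (ascPochhammer ℝ (2 * n)).eval a‖ ≤
      (2 * n + 1) * (R ^ 2) ^ n / (ascPochhammer ℝ (2 * n)).eval a := by
  have hP := ascPochhammer_pos (2 * n) a ha
  rw [norm_div, norm_mul, norm_pow, norm_neg, norm_one, one_pow, one_mul, norm_pow,
    Real.norm_of_nonneg hP.le, Real.norm_eq_abs, ← pow_mul]
  gcongr ?_ / _
  calc |y| ^ (2 * n) ≤ R ^ (2 * n) := by gcongr
    _ ≤ (2 * n + 1) * R ^ (2 * n) := le_mul_of_one_le_left (by positivity) (by linarith)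

theorem norm_phiDeriv_term_le (ha : 0 < a) (hR : 1 ≤ R) (hy : |y| ≤ R) (n : ℕ) :
    ‖(-1 : ℝ) ^ n * ((2 * n : ℕ) * y ^ (2 * n - 1)) / (ascPochhammer ℝ (2 * n)).eval a‖ ≤
      (2 * n + 1) * (R ^ 2) ^ n / (ascPochhammer ℝ (2 * n)).eval a := by
  have hP := ascPochhammer_pos (2 * n) a ha
  rw [norm_div, norm_mul, norm_pow, norm_neg, norm_one, one_pow, one_mul, norm_mul, norm_pow,
    Real.norm_of_nonneg hP.le, Real.norm_natCast, Real.norm_eq_abs, ← pow_mul]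
  gcongr ?_ / _
  push_cast
  calc 2 * n * |y| ^ (2 * n - 1) ≤ 2 * n * R ^ (2 * n) := by
        gcongr
        exact (pow_le_pow_left₀ (abs_nonneg y) hy _).trans (pow_le_pow_right₀ hR (Nat.sub_le _ _))
    _ ≤ (2 * n + 1) * R ^ (2 * n) := by gcongr; linarith

theorem summable_phi_term (ha : 0 < a) (z : ℝ) :
    Summable fun n : ℕ => (-1 : ℝ) ^ n * z ^ (2 * n) / (ascPochhammer ℝ (2 * n)).eval a :=
  .of_norm_bounded (summable_phi_majorant ha (sq_nonneg (|z| + 1)))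
    (norm_phi_term_le ha (by linarith [abs_nonneg z]) (by linarith))

theorem summable_phiDeriv_term (ha : 0 < a) (z : ℝ) :
    Summable fun n : ℕ =>
      (-1 : ℝ) ^ n * ((2 * n : ℕ) * z ^ (2 * n - 1)) / (ascPochhammer ℝ (2 * n)).eval a :=
  .of_norm_bounded (summable_phi_majorant ha (sq_nonneg (|z| + 1)))
    (norm_phiDeriv_term_le ha (by linarith [abs_nonneg z]) (by linarith))

theorem hasDerivAt_phi (ha : 0 < a) (z : ℝ) : HasDerivAt (phi a) (phiDeriv a z) z := by
  have hR : 1 ≤ |z| + 1 := by linarith [abs_nonneg z]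
  have hz : z ∈ Metric.ball (0 : ℝ) (|z| + 1) := by
    rw [mem_ball_zero_iff, Real.norm_eq_abs]
    linarith
  refine hasDerivAt_tsum_of_isPreconnected (summable_phi_majorant ha (sq_nonneg (|z| + 1)))
    (g := fun n y => (-1 : ℝ) ^ n * y ^ (2 * n) / (ascPochhammer ℝ (2 * n)).eval a)
    (g' := fun n y =>
      (-1 : ℝ) ^ n * ((2 * n : ℕ) * y ^ (2 * n - 1)) / (ascPochhammer ℝ (2 * n)).eval a)
    Metric.isOpen_ball (convex_ball _ _).isPreconnected (fun n y _ => ?_)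
    (fun n y hy => norm_phiDeriv_term_le ha hR ?_ n) hz (summable_phi_term ha z) hz
  · simpa [mul_div_assoc] using
      ((hasDerivAt_pow (2 * n) y).const_mul ((-1 : ℝ) ^ n)).div_const
        ((ascPochhammer ℝ (2 * n)).eval a)
  · rw [mem_ball_zero_iff, Real.norm_eq_abs] at hy
    exact hy.le

theorem continuous_phi (ha : 0 < a) : Continuous (phi a) :=
  continuous_iff_continuousAt.2 fun z => (hasDerivAt_phi ha z).continuousAt

theorem phi_zero_right (a : ℝ) : phi a 0 = 1 := by
  rw [phi, tsum_eq_single 0 fun n hn => by simp [hn]]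
  simp

theorem mul_phi_eq (ha : 0 < a) (z : ℝ) :
    a * phi a z = a * phi (a + 1) z + z * phiDeriv (a + 1) z := by
  have ha₁ : 0 < a + 1 := by linarith
  rw [phi, phi, phiDeriv, ← tsum_mul_left, ← tsum_mul_left, ← tsum_mul_left,
    ← ((summable_phi_term ha₁ z).mul_left a).tsum_add ((summable_phiDeriv_term ha₁ z).mul_left z)]
  refine tsum_congr fun n => ?_
  have hP := (ascPochhammer_pos (2 * n) a ha).ne'
  have hP₁ := (ascPochhammer_pos (2 * n) (a + 1) ha₁).ne'
  have hshift := mul_ascPochhammer_eval_add_one a (2 * n)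
  rcases Nat.eq_zero_or_pos n with rfl | hn
  · simp
  · have hpow : z * z ^ (2 * n - 1) = z ^ (2 * n) := by
      rw [← pow_succ']
      congr 1
      omega
    field_simp
    push_cast at hshift ⊢
    linear_combination z ^ (2 * n) * hshift - 2 * n * (ascPochhammer ℝ (2 * n)).eval a * hpow

theorem phi_eq_one_sub (ha : 0 < a) (z : ℝ) :
    phi a z = 1 - z ^ 2 * phi (a + 2) z / (a * (a + 1)) := by
  have hshift : ∀ n : ℕ, (-1 : ℝ) ^ (n + 1) * z ^ (2 * (n + 1)) /
      (ascPochhammer ℝ (2 * (n + 1))).eval a = -(z ^ 2 / (a * (a + 1))) *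
      ((-1 : ℝ) ^ n * z ^ (2 * n) / (ascPochhammer ℝ (2 * n)).eval (a + 2)) := fun n => by
    have hP := (ascPochhammer_pos (2 * n) (a + 2) (by linarith)).ne'
    rw [show 2 * (n + 1) = 2 + 2 * n by ring, ascPochhammer_eval_two_add, pow_add]
    field_simp
    ring
  rw [phi, (summable_phi_term ha z).tsum_eq_zero_add, tsum_congr hshift, tsum_mul_left, ← phi]
  simp
  ring

end Phi

noncomputable def rpowPhi (a z : ℝ) : ℝ := z ^ a * phi (a + 1) z

section RpowPhi

variable {a z : ℝ}

theorem hasDerivAt_rpowPhi (ha : 0 < a) (hz : 0 < z) :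
    HasDerivAt (rpowPhi a) (a * rpowPhi (a - 1) z) z := by
  refine ((hasDerivAt_rpow_const (Or.inl hz.ne')).mul
    (hasDerivAt_phi (by linarith) z)).congr_deriv ?_
  have hpow : z ^ a = z ^ (a - 1) * z := by rw [← Real.rpow_add_one hz.ne', sub_add_cancel]
  rw [rpowPhi, sub_add_cancel, hpow]
  linear_combination (-z ^ (a - 1)) * mul_phi_eq ha z

theorem rpowPhi_sub_one (ha : 0 < a) (hz : 0 < z) :
    a * (a + 1) * rpowPhi (a - 1) z = a * (a + 1) * z ^ (a - 1) - rpowPhi (a + 1) z := by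
  have hpow : z ^ (a + 1) = z ^ (a - 1) * z ^ 2 := by
    rw [← Real.rpow_natCast, ← Real.rpow_add hz]
    norm_num
    ring_nf
  rw [rpowPhi, rpowPhi, sub_add_cancel, phi_eq_one_sub ha, hpow, add_assoc]
  norm_num
  field_simp

theorem lommel_eq_rpowPhi (hz : 0 < z) (a : ℝ) :
    lommel (a - 3 / 2) z = rpowPhi a z / (√z * ((a - 1) * a)) := by
  have hpow : z ^ (a - 3 / 2 + 1) = z ^ a / √z := by
    rw [Real.sqrt_eq_rpow, ← Real.rpow_sub hz]
    ring_nf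
  rw [lommel, rpowPhi, hpow, show a - 3 / 2 + 1 / 2 = a - 1 by ring,
    show a - 3 / 2 + 3 / 2 = a by ring, show a - 3 / 2 + 5 / 2 = a + 1 by ring, div_div,
    div_mul_eq_mul_div]

end RpowPhi

def energy (G G' r : ℝ → ℝ) (t : ℝ) : ℝ := (G t - r t) ^ 2 + G' t ^ 2

section Energy

variable {G G' r r' : ℝ → ℝ} {s : Set ℝ}

theorem hasDerivAt_energy {t : ℝ} (hG : HasDerivAt G (G' t) t)
    (hG' : HasDerivAt G' (r t - G t) t) (hr : HasDerivAt r (r' t) t) :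
    HasDerivAt (energy G G' r) (-2 * r' t * (G t - r t)) t := by
  refine (((hG.sub hr).pow 2).add (hG'.pow 2)).congr_deriv ?_
  simp only [Pi.sub_apply]
  ring

theorem monotoneOn_sqrt_energy_add_sub (hs : Convex ℝ s)
    (hG : ∀ t ∈ s, HasDerivAt G (G' t) t) (hG' : ∀ t ∈ s, HasDerivAt G' (r t - G t) t)
    (hr : ∀ t ∈ s, HasDerivAt r (r' t) t) (hr' : ∀ t ∈ s, r' t ≤ 0) {ε : ℝ} (hε : 0 < ε) :
    MonotoneOn (fun t => √(energy G G' r t + ε) - r t) s := by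
  have hpos' : ∀ t, 0 < energy G G' r t + ε := fun t => by unfold energy; positivity
  have hpos : ∀ t, 0 < √(energy G G' r t + ε) := fun t => Real.sqrt_pos.2 (hpos' t)
  have hderiv : ∀ t ∈ s, HasDerivAt (fun t => √(energy G G' r t + ε) - r t)
      (-r' t * ((G t - r t) / √(energy G G' r t + ε) + 1)) t := by
    intro t ht
    refine ((((hasDerivAt_energy (hG t ht) (hG' t ht) (hr t ht)).add_const ε).sqrt
      (hpos' t).ne').sub (hr t ht)).congr_deriv ?_
    field_simp
    ring
  refine monotoneOn_of_hasDerivWithinAt_nonneg hs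
    (fun t ht => (hderiv t ht).continuousAt.continuousWithinAt)
    (fun t ht => (hderiv t (interior_subset ht)).hasDerivWithinAt) fun t ht => ?_
  have hdist : |G t - r t| ≤ √(energy G G' r t + ε) :=
    Real.abs_le_sqrt (by unfold energy; nlinarith [sq_nonneg (G' t)])
  have : 0 ≤ (G t - r t) / √(energy G G' r t + ε) + 1 := by
    rw [div_add_one (hpos t).ne']
    exact div_nonneg (by linarith [neg_abs_le (G t - r t)]) (hpos t).le
  exact mul_nonneg (neg_nonneg.2 (hr' t (interior_subset ht))) this

theorem monotoneOn_sqrt_energy_sub (hs : Convex ℝ s)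
    (hG : ∀ t ∈ s, HasDerivAt G (G' t) t) (hG' : ∀ t ∈ s, HasDerivAt G' (r t - G t) t)
    (hr : ∀ t ∈ s, HasDerivAt r (r' t) t) (hr' : ∀ t ∈ s, r' t ≤ 0) :
    MonotoneOn (fun t => √(energy G G' r t) - r t) s := by
  intro x hx y hy hxy
  have hlim : ∀ t, Tendsto (fun ε => √(energy G G' r t + ε) - r t) (𝓝[>] 0)
      (𝓝 (√(energy G G' r t) - r t)) := fun t => by
    have : Continuous fun ε => √(energy G G' r t + ε) - r t := by fun_prop
    simpa using (this.tendsto 0).mono_left nhdsWithin_le_nhds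
  exact le_of_tendsto_of_tendsto (hlim x) (hlim y) (eventually_nhdsWithin_of_forall
    fun ε hε => monotoneOn_sqrt_energy_add_sub hs hG hG' hr hr' hε hx hy hxy)

theorem sq_lt_energy_of_le (hs : Convex ℝ s)
    (hG : ∀ t ∈ s, HasDerivAt G (G' t) t) (hG' : ∀ t ∈ s, HasDerivAt G' (r t - G t) t)
    (hr : ∀ t ∈ s, HasDerivAt r (r' t) t) (hr' : ∀ t ∈ s, r' t ≤ 0)
    (hr₀ : ∀ t ∈ s, 0 ≤ r t) {a b : ℝ} (ha : a ∈ s) (hb : b ∈ s) (hab : a ≤ b)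
    (hstart : r a ^ 2 < energy G G' r a) : r b ^ 2 < energy G G' r b := by
  rw [← Real.lt_sqrt (hr₀ a ha)] at hstart
  rw [← Real.lt_sqrt (hr₀ b hb)]
  linarith [monotoneOn_sqrt_energy_sub hs hG hG' hr hr' ha hb hab]

end Energy

theorem mul_sub_lt_sq_of_sq_lt {g g' r : ℝ} (hr : 0 < r) (h : r ^ 2 < (g - r) ^ 2 + g' ^ 2) :
    g * (r - g) < g' ^ 2 := by
  rcases le_or_gt 0 g with hg | hg <;> nlinarith

section Turan

variable {μ z : ℝ}

theorem eventually_sq_lt_energy (hμ₀ : 0 < μ) (hμ₁ : μ < 1) :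
    ∀ᶠ t in 𝓝[>] 0, (μ * (μ + 1) * t ^ (μ - 1)) ^ 2 < energy (rpowPhi (μ + 1))
      (fun t => (μ + 1) * rpowPhi μ t) (fun t => μ * (μ + 1) * t ^ (μ - 1)) t := by
  have hlim : Tendsto (fun t => (μ + 1) * phi (μ + 1) t ^ 2 - 2 * μ * phi (μ + 2) t) (𝓝 0)
      (𝓝 (1 - μ)) := by
    have h₁ := continuous_phi (a := μ + 1) (by linarith)
    have h₂ := continuous_phi (a := μ + 2) (by linarith)
    refine Continuous.tendsto' (by fun_prop) 0 _ ?_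
    simp only [phi_zero_right]
    ring
  filter_upwards [self_mem_nhdsWithin, nhdsWithin_le_nhds
    (hlim.eventually (lt_mem_nhds (sub_pos.2 hμ₁)))] with t (ht : 0 < t) hpos
  have hpow : t ^ (μ - 1) * t ^ (μ + 1) = t ^ μ * t ^ μ := by
    rw [← Real.rpow_add ht, ← Real.rpow_add ht]
    ring_nf
  have hexpand : energy (rpowPhi (μ + 1)) (fun t => (μ + 1) * rpowPhi μ t)
      (fun t => μ * (μ + 1) * t ^ (μ - 1)) t - (μ * (μ + 1) * t ^ (μ - 1)) ^ 2 =
      (t ^ (μ + 1) * phi (μ + 2) t) ^ 2 + (μ + 1) * (t ^ μ * t ^ μ) *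
        ((μ + 1) * phi (μ + 1) t ^ 2 - 2 * μ * phi (μ + 2) t) := by
    simp only [energy, rpowPhi, show μ + 1 + 1 = μ + 2 by ring]
    linear_combination (-2 * μ * (μ + 1) * phi (μ + 2) t) * hpow
  have htμ := Real.rpow_pos_of_pos ht μ
  have : 0 < (μ + 1) * (t ^ μ * t ^ μ) * ((μ + 1) * phi (μ + 1) t ^ 2 - 2 * μ * phi (μ + 2) t) :=
    mul_pos (mul_pos (by linarith) (mul_pos htμ htμ)) hpos
  nlinarith [sq_nonneg (t ^ (μ + 1) * phi (μ + 2) t)]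

theorem rpowPhi_turan (hμ₀ : 0 < μ) (hμ₁ : μ < 1) (hz : 0 < z) :
    μ * rpowPhi (μ - 1) z * rpowPhi (μ + 1) z < (μ + 1) * rpowPhi μ z ^ 2 := by
  set G := rpowPhi (μ + 1)
  set G' := fun t => (μ + 1) * rpowPhi μ t
  set r := fun t : ℝ => μ * (μ + 1) * t ^ (μ - 1)
  have hG : ∀ t ∈ Ioi (0 : ℝ), HasDerivAt G (G' t) t := fun t ht => by
    simpa using hasDerivAt_rpowPhi (a := μ + 1) (by linarith) ht
  have hG' : ∀ t ∈ Ioi (0 : ℝ), HasDerivAt G' (r t - G t) t := fun t ht =>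
    ((hasDerivAt_rpowPhi hμ₀ ht).const_mul (μ + 1)).congr_deriv
      (by linear_combination rpowPhi_sub_one hμ₀ ht)
  have hr : ∀ t ∈ Ioi (0 : ℝ), HasDerivAt r (μ * (μ + 1) * ((μ - 1) * t ^ (μ - 1 - 1))) t :=
    fun t ht => (hasDerivAt_rpow_const (Or.inl (ne_of_gt ht))).const_mul _
  have hr' : ∀ t ∈ Ioi (0 : ℝ), μ * (μ + 1) * ((μ - 1) * t ^ (μ - 1 - 1)) ≤ 0 := fun t ht =>
    mul_nonpos_of_nonneg_of_nonpos (by nlinarith)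
      (mul_nonpos_of_nonpos_of_nonneg (by linarith) (Real.rpow_nonneg (le_of_lt ht) _))
  have hr₀ : ∀ t ∈ Ioi (0 : ℝ), 0 < r t := fun t ht =>
    mul_pos (by nlinarith) (Real.rpow_pos_of_pos ht _)
  obtain ⟨z₀, hstart, hz₀⟩ := ((eventually_sq_lt_energy hμ₀ hμ₁).and (Ioo_mem_nhdsGT hz)).exists
  have hend := sq_lt_energy_of_le (convex_Ioi 0) hG hG' hr hr' (fun t ht => (hr₀ t ht).le)
    hz₀.1 hz hz₀.2.le hstart
  have key := mul_sub_lt_sq_of_sq_lt (hr₀ z hz) hend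
  have hrec := rpowPhi_sub_one hμ₀ hz
  refine lt_of_mul_lt_mul_left (a := μ + 1) ?_ (by linarith)
  simp only [G, G', r] at key
  linear_combination key + rpowPhi (μ + 1) z * hrec

end Turan

theorem lommel_turan_shifted (μ : ℝ) (hμ₀ : 0 < μ) (hμ₁ : μ < 1) (z : ℝ) (hz : 0 < z) :
    (μ - 2) * lommel (μ - 5/2) z * lommel (μ - 1/2) z -
      (μ - 1) * (lommel (μ - 3/2) z) ^ 2 > 0 := by
  have h₁ := lommel_eq_rpowPhi hz (μ - 1)
  have h₂ := lommel_eq_rpowPhi hz μ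
  have h₃ := lommel_eq_rpowPhi hz (μ + 1)
  rw [show μ - 1 - 3 / 2 = μ - 5 / 2 by ring, show μ - 1 - 1 = μ - 2 by ring] at h₁
  rw [show μ + 1 - 3 / 2 = μ - 1 / 2 by ring, add_sub_cancel_right] at h₃
  have hsqrt := Real.sqrt_pos.2 hz
  have hμ2 : μ - 2 ≠ 0 := by linarith
  have hμ1 : μ - 1 ≠ 0 := by linarith
  have hμ1' : 1 - μ ≠ 0 := by linarith
  have hμ0 : μ ≠ 0 := by linarith
  have hμ0' : μ + 1 ≠ 0 := by linarith
  have hexpr : (μ - 2) * lommel (μ - 5/2) z * lommel (μ - 1/2) z -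
      (μ - 1) * (lommel (μ - 3/2) z) ^ 2 =
      ((μ + 1) * rpowPhi μ z ^ 2 - μ * rpowPhi (μ - 1) z * rpowPhi (μ + 1) z) /
        ((1 - μ) * μ ^ 2 * (μ + 1) * √z ^ 2) := by
    rw [h₁, h₂, h₃]
    field_simp
    ring
  rw [hexpr, gt_iff_lt]
  exact div_pos (sub_pos.2 (rpowPhi_turan hμ₀ hμ₁ hz))
    (mul_pos (mul_pos (mul_pos (by linarith) (by positivity)) (by linarith)) (by positivity))
end

section
/- Let μ be a real number with μ−1, μ, μ+1 all outside the set {−1/2, −3/2, −5/2, …} (equivalently μ ∉ {1/2, −1/2, −3/2, −5/2, …}). Then for every z > 0, s′_{μ+1,1/2}(z)·s_{μ,1/2}(z) − s_{μ+1,1/2}(z)·s′_{μ,1/2}(z) = (μ+1/2)·[s_{μ,1/2}(z)]² − (μ−1/2)·s_{μ−1,1/2}(z)·s_{μ+1,1/2}(z), where ′ denotes differentiation with respect to z. -/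
/-!
Differentiating the series termwise and using `(a)ₘ (a + m) = a (a + 1)ₘ` gives
`d/dz φ(a + 1, z) = a (φ(a, z) - φ(a + 1, z)) / z`, which is equivalent to Lommel's recurrence
`s'_{ν+1,1/2}(z) + s_{ν+1,1/2}(z) / (2z) = (ν + 1/2) s_{ν,1/2}(z)`. Substituting it at `ν = μ` and
`ν = μ - 1` into the Wronskian, the two terms `s_{μ+1,1/2} s_{μ,1/2} / (2z)` cancel.
-/

open Real

theorem ascPochhammer_eval_ne_zero {R : Type*} [CommRing R] [IsDomain R] {a : R}
    (ha : ∀ k : ℕ, a + k ≠ 0) (n : ℕ) : (ascPochhammer R n).eval a ≠ 0 := by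
  rw [ne_eq, ascPochhammer_eval_eq_zero_iff]
  rintro ⟨k, -, hk⟩
  exact ha k (by rw [hk, add_neg_cancel])

theorem ascPochhammer_eval_mul_add {S : Type*} [CommSemiring S] (a : S) (m : ℕ) :
    (ascPochhammer S m).eval a * (a + m) = a * (ascPochhammer S m).eval (a + 1) := by
  rw [← ascPochhammer_succ_eval, ascPochhammer_succ_left]
  simp [Polynomial.eval_comp]

theorem summable_pow_div_ascPochhammer_eval {a : ℝ} (ha : ∀ k : ℕ, a + k ≠ 0) (R : ℝ) :
    Summable fun n : ℕ => R ^ n / (ascPochhammer ℝ n).eval a := by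
  refine summable_of_ratio_norm_eventually_le (r := 1 / 2) (by norm_num) ?_
  filter_upwards [Filter.eventually_ge_atTop ⌈2 * |R| + |a|⌉₊] with n hn
  have hlarge : 2 * |R| ≤ |a + n| :=
    le_trans (by linarith [Nat.ceil_le.mp hn, neg_abs_le a]) (le_abs_self _)
  have hpos : 0 < |a + n| := abs_pos.mpr (ha n)
  simp only [norm_div, norm_pow, Real.norm_eq_abs, ascPochhammer_succ_eval, abs_mul, abs_pow,
    pow_succ]
  calc |R| ^ n * |R| / (|(ascPochhammer ℝ n).eval a| * |a + n|)
      = |R| ^ n / |(ascPochhammer ℝ n).eval a| * (|R| / |a + n|) := mul_div_mul_comm _ _ _ _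
    _ ≤ |R| ^ n / |(ascPochhammer ℝ n).eval a| * (1 / 2) := by
        refine mul_le_mul_of_nonneg_left ?_ (by positivity)
        rw [div_le_iff₀ hpos]
        linarith
    _ = 1 / 2 * (|R| ^ n / |(ascPochhammer ℝ n).eval a|) := mul_comm _ _

theorem summable_phi_terms {a : ℝ} (ha : ∀ k : ℕ, a + k ≠ 0) (z : ℝ) :
    Summable fun n : ℕ => (-1 : ℝ) ^ n * z ^ (2 * n) / (ascPochhammer ℝ (2 * n)).eval a := by
  refine ((summable_pow_div_ascPochhammer_eval ha z).comp_injective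
    (mul_right_injective₀ two_ne_zero)).abs.of_norm_bounded fun n => le_of_eq ?_
  simp [abs_div]

theorem abs_natCast_mul_pow_sub_one_le {R y : ℝ} (hR : 1 ≤ R) (hy : |y| ≤ R) (m : ℕ) :
    |m * y ^ (m - 1)| ≤ (2 * R) ^ m := by
  have hm : (m : ℝ) ≤ 2 ^ m := by exact_mod_cast m.lt_two_pow_self.le
  have hpow : |y| ^ (m - 1) ≤ R ^ m :=
    (pow_le_pow_left₀ (abs_nonneg y) hy _).trans (pow_le_pow_right₀ hR (Nat.sub_le m 1))
  rw [abs_mul, abs_pow, Nat.abs_cast, mul_pow]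
  exact mul_le_mul hm hpow (by positivity) (by positivity)

theorem hasDerivAt_phi_s17 {a : ℝ} (ha : ∀ k : ℕ, a + k ≠ 0) (z : ℝ) :
    HasDerivAt (phi a)
      (∑' n : ℕ, (-1 : ℝ) ^ n * ((2 * n : ℕ) * z ^ (2 * n - 1)) /
        (ascPochhammer ℝ (2 * n)).eval a) z := by
  set R := |z| + 1
  have hR : 1 ≤ R := le_add_of_nonneg_left (abs_nonneg z)
  have hz : z ∈ Metric.ball (0 : ℝ) R := by simp [R]
  have hmajorant : Summable fun n : ℕ => |(2 * R) ^ (2 * n) / (ascPochhammer ℝ (2 * n)).eval a| :=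
    ((summable_pow_div_ascPochhammer_eval ha (2 * R)).comp_injective
      (mul_right_injective₀ two_ne_zero)).abs
  unfold phi
  refine hasDerivAt_tsum_of_isPreconnected
    (g := fun n y => (-1 : ℝ) ^ n * y ^ (2 * n) / (ascPochhammer ℝ (2 * n)).eval a)
    (g' := fun n y => (-1 : ℝ) ^ n * ((2 * n : ℕ) * y ^ (2 * n - 1)) /
      (ascPochhammer ℝ (2 * n)).eval a)
    hmajorant Metric.isOpen_ball (convex_ball 0 R).isPreconnected (fun n y _ => ?_)
    (fun n y hy => ?_) hz (summable_phi_terms ha z) hz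
  · exact ((hasDerivAt_pow (2 * n) y).const_mul _).div_const _
  · rw [mem_ball_zero_iff, Real.norm_eq_abs] at hy
    rw [Real.norm_eq_abs, abs_div, abs_div, abs_mul, abs_pow, abs_neg, abs_one, one_pow, one_mul]
    exact div_le_div_of_nonneg_right
      ((abs_natCast_mul_pow_sub_one_le hR hy.le _).trans (le_abs_self _)) (abs_nonneg _)

theorem hasDerivAt_phi_add_one {a : ℝ} (ha : ∀ k : ℕ, a + k ≠ 0) {z : ℝ} (hz : z ≠ 0) :
    HasDerivAt (phi (a + 1)) (a * (phi a z - phi (a + 1) z) / z) z := by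
  have ha1 : ∀ k : ℕ, a + 1 + k ≠ 0 := fun k h => ha (k + 1) (by push_cast; linarith)
  convert hasDerivAt_phi_s17 ha1 z using 1
  rw [phi, phi, ← (summable_phi_terms ha z).tsum_sub (summable_phi_terms ha1 z),
    ← tsum_mul_left, ← tsum_div_const]
  refine tsum_congr fun n => ?_
  have hrec := ascPochhammer_eval_mul_add a (2 * n)
  have hp := ascPochhammer_eval_ne_zero ha (2 * n)
  have hp1 := ascPochhammer_eval_ne_zero ha1 (2 * n)
  rcases Nat.eq_zero_or_pos n with rfl | hn
  · simp
  · rw [← pow_sub_one_mul (by omega : 2 * n ≠ 0) z]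
    field_simp
    linear_combination -hrec

theorem hasDerivAt_lommel_add_one {ν : ℝ} (hν : ∀ k : ℕ, ν + 1 / 2 + k ≠ 0) {z : ℝ}
    (hz : 0 < z) :
    HasDerivAt (lommel (ν + 1)) ((ν + 1 / 2) * lommel ν z - lommel (ν + 1) z / (2 * z)) z := by
  have ha : ∀ k : ℕ, ν + 5 / 2 + k ≠ 0 := fun k h => hν (k + 2) (by push_cast; linarith)
  have h1 : ν * 2 + 1 ≠ 0 := fun h => hν 0 (by push_cast; linarith)
  have h3 : ν * 2 + 3 ≠ 0 := fun h => hν 1 (by push_cast; linarith)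
  have h5 : ν * 2 + 5 ≠ 0 := fun h => hν 2 (by push_cast; linarith)
  have hshift : lommel (ν + 1) =
      fun y => y ^ (ν + 2) / ((ν + 3 / 2) * (ν + 5 / 2)) * phi (ν + 5 / 2 + 1) y := by
    funext y
    rw [lommel]
    ring_nf
  have hpow : HasDerivAt (fun y : ℝ => y ^ (ν + 2)) ((ν + 2) * z ^ (ν + 1)) z := by
    convert hasDerivAt_rpow_const (p := ν + 2) (Or.inl hz.ne') using 3
    ring
  rw [hshift]
  refine ((hpow.div_const ((ν + 3 / 2) * (ν + 5 / 2))).mul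
    (hasDerivAt_phi_add_one ha hz.ne')).congr_deriv ?_
  have hz2 : z ^ (ν + 2) = z ^ (ν + 1) * z := by rw [← rpow_add_one hz.ne']; ring_nf
  beta_reduce
  rw [lommel, hz2]
  field_simp
  ring

theorem lommel_wronskian_identity (μ : ℝ) (hμ : μ ≠ 1/2)
    (hμ' : ∀ k : ℕ, μ ≠ -(1/2) - (k : ℝ)) (z : ℝ) (hz : 0 < z) :
    deriv (lommel (μ + 1)) z * lommel μ z - lommel (μ + 1) z * deriv (lommel μ) z =
      (μ + 1/2) * (lommel μ z) ^ 2 - (μ - 1/2) * lommel (μ - 1) z * lommel (μ + 1) z := by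
  have hμ_add : ∀ k : ℕ, μ + 1 / 2 + k ≠ 0 := fun k h => hμ' k (by linarith)
  have hμ_sub : ∀ k : ℕ, μ - 1 + 1 / 2 + k ≠ 0 := by
    rintro (_ | k) h
    · exact hμ (by push_cast at h; linarith)
    · exact hμ' k (by push_cast at h; linarith)
  have hderiv_add := hasDerivAt_lommel_add_one hμ_add hz
  have hderiv := hasDerivAt_lommel_add_one hμ_sub hz
  rw [sub_add_cancel] at hderiv
  rw [hderiv_add.deriv, hderiv.deriv]
  ring
end
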